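/- arXiv:2407.19676 — 3 statements merged into one kernel-verified Lean document; each statement's English description precedes it below -/
import Mathlib

section
/- Let n be a positive integer, let x⋆ ∈ {0,1}^n, and let Q be a symmetric real n×n matrix with the x⋆-sign pattern, i.e., Q_{ij} > 0 whenever x⋆_i x⋆_j = 1 and Q_{ij} < 0 otherwise. Let x ∈ {0,1}^n and let k be an index with x_k = 1 and x⋆_k = 0. Then f_Q(flip_k(x)) > f_Q(x), where f_Q(x) = xᵀQx and flip_k(x) is x with its k-th coordinate flipped. -/
/-- UBQP objective `f_Q(x) = xᵀQx`. -/
def fQ {n : ℕ} (Q : Fin n → Fin n → ℝ) (x : Fin n → ℝ) : ℝ :=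
  ∑ i, ∑ j, Q i j * x i * x j

/-- `flipBit x k` is `x` with its `k`-th coordinate flipped (`0 ↔ 1` on binary vectors). -/
def flipBit {n : ℕ} (x : Fin n → ℝ) (k : Fin n) : Fin n → ℝ :=
  Function.update x k (1 - x k)

/-- `x` is a binary (0/1) vector. -/
def IsBinary {n : ℕ} (x : Fin n → ℝ) : Prop := ∀ i, x i = 0 ∨ x i = 1

/-- `Q` has the `x⋆`-sign pattern: `Q i j > 0` whenever `x⋆_i x⋆_j = 1`, and `Q i j < 0`
otherwise. -/
def SignPattern {n : ℕ} (xs : Fin n → ℝ) (Q : Fin n → Fin n → ℝ) : Prop :=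
  ∀ i j, (xs i * xs j = 1 → 0 < Q i j) ∧ (xs i * xs j ≠ 1 → Q i j < 0)

/-! Zeroing a coordinate `k` of a nonnegative vector changes only the terms of `xᵀQx` in row and
column `k`; when these entries of `Q` are nonpositive each such term can only grow, and the
diagonal term `Q k k * x k ^ 2` grows strictly. -/

theorem fQ_lt_fQ_of_le_of_lt {n : ℕ} {Q : Fin n → Fin n → ℝ} {x y : Fin n → ℝ}
    (hle : ∀ i j, Q i j * x i * x j ≤ Q i j * y i * y j) {k l : Fin n}
    (hlt : Q k l * x k * x l < Q k l * y k * y l) : fQ Q x < fQ Q y :=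
  Finset.sum_lt_sum (fun i _ => Finset.sum_le_sum fun j _ => hle i j)
    ⟨k, Finset.mem_univ _, Finset.sum_lt_sum (fun j _ => hle k j) ⟨l, Finset.mem_univ _, hlt⟩⟩

theorem fQ_lt_fQ_update_zero {n : ℕ} {Q : Fin n → Fin n → ℝ} {x : Fin n → ℝ} {k : Fin n}
    (hx : 0 ≤ x) (hcol : ∀ i, Q i k ≤ 0) (hrow : ∀ j, Q k j ≤ 0) (hkk : Q k k < 0)
    (hxk : x k ≠ 0) : fQ Q x < fQ Q (Function.update x k 0) := by
  refine fQ_lt_fQ_of_le_of_lt (fun i j => ?_) (k := k) (l := k) ?_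
  · rcases eq_or_ne i k with rfl | hi
    · simpa using
        mul_nonpos_of_nonpos_of_nonneg (mul_nonpos_of_nonpos_of_nonneg (hrow j) (hx i)) (hx j)
    rcases eq_or_ne j k with rfl | hj
    · simpa using
        mul_nonpos_of_nonpos_of_nonneg (mul_nonpos_of_nonpos_of_nonneg (hcol i) (hx i)) (hx j)
    simp [hi, hj]
  · simpa [mul_assoc] using mul_neg_of_neg_of_pos hkk (mul_self_pos.2 hxk)

theorem flipBit_of_eq_one {n : ℕ} {x : Fin n → ℝ} {k : Fin n} (hxk : x k = 1) :
    flipBit x k = Function.update x k 0 := by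
  simp [flipBit, hxk]

theorem IsBinary.nonneg {n : ℕ} {x : Fin n → ℝ} (hx : IsBinary x) : 0 ≤ x :=
  fun i => (hx i).elim ge_of_eq fun h => h ▸ zero_le_one

namespace SignPattern

variable {n : ℕ} {xs : Fin n → ℝ} {Q : Fin n → Fin n → ℝ} {k : Fin n}

theorem col_neg_of_eq_zero (hQ : SignPattern xs Q) (hk : xs k = 0) (i : Fin n) : Q i k < 0 :=
  (hQ i k).2 (by simp [hk])

theorem row_neg_of_eq_zero (hQ : SignPattern xs Q) (hk : xs k = 0) (j : Fin n) : Q k j < 0 :=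
  (hQ k j).2 (by simp [hk])

end SignPattern

theorem flip_off_outside_support_improves_general {n : ℕ}
    (xs : Fin n → ℝ)
    (Q : Fin n → Fin n → ℝ)
    (hQ : SignPattern xs Q)
    (x : Fin n → ℝ) (hx : IsBinary x)
    (k : Fin n) (hxk : x k = 1) (hxsk : xs k = 0) :
    fQ Q x < fQ Q (flipBit x k) := by
  rw [flipBit_of_eq_one hxk]
  exact fQ_lt_fQ_update_zero hx.nonneg (fun i => (hQ.col_neg_of_eq_zero hxsk i).le)
    (fun j => (hQ.row_neg_of_eq_zero hxsk j).le) (hQ.col_neg_of_eq_zero hxsk k) (by simp [hxk])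

/-- turning off a bit outside the support of `x⋆` strictly increases the
objective of a matrix with the `x⋆`-sign pattern. -/
theorem flip_off_outside_support_improves {n : ℕ} (hn : 0 < n)
    (xs : Fin n → ℝ) (hxs : IsBinary xs)
    (Q : Fin n → Fin n → ℝ) (hQsymm : ∀ i j, Q i j = Q j i)
    (hQ : SignPattern xs Q)
    (x : Fin n → ℝ) (hx : IsBinary x)
    (k : Fin n) (hxk : x k = 1) (hxsk : xs k = 0) :
    fQ Q x < fQ Q (flipBit x k) :=
  flip_off_outside_support_improves_general xs Q hQ x hx k hxk hxsk
end

section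
/- Let n be a positive integer, let x⋆ ∈ {0,1}^n, and let Q be a symmetric real n×n matrix with the x⋆-sign pattern, i.e., Q_{ij} > 0 whenever x⋆_i x⋆_j = 1 and Q_{ij} < 0 otherwise. Then for every x ∈ {0,1}^n there exists a sequence x = x^(0), x^(1), …, x^(d) = x⋆, where d is the Hamming distance between x and x⋆, such that each x^(t+1) is obtained from x^(t) by flipping a single coordinate and f_Q(x^(t+1)) > f_Q(x^(t)) for all 0 ≤ t < d. -/
/-!
Flipping coordinate `k` of a binary `x` changes `xᵀQx` by `±(Q k k + ∑_{j ≠ k} (Q k j + Q j k) x j)`,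
with the sign of the change of `x k`. Under the `x⋆`-sign pattern these entries are all negative
when `x⋆ k = 0` and all positive on the support of `x⋆`. Hence switching off a coordinate outside
the support of `x⋆` strictly gains, and once there is none left (`x ≤ x⋆`), so does switching on a
missing coordinate of `x⋆`. Either flip lowers the Hamming distance to `x⋆` by one.
-/

open Function Finset

theorem exists_chain_of_forall_exists_step {α : Type*} (P : α → Prop) (R : α → α → Prop)
    (d : α → ℕ) (a : α) (hzero : ∀ y, P y → d y = 0 → y = a)
    (hstep : ∀ y, P y → d y ≠ 0 → ∃ z, P z ∧ d z + 1 = d y ∧ R y z) :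
    ∀ y, P y → ∃ p : ℕ → α, p 0 = y ∧ p (d y) = a ∧ ∀ t < d y, R (p t) (p (t + 1)) := by
  suffices ∀ m y, P y → d y = m →
      ∃ p : ℕ → α, p 0 = y ∧ p m = a ∧ ∀ t < m, R (p t) (p (t + 1)) from
    fun y hy => this _ y hy rfl
  intro m
  induction m with
  | zero => exact fun y hy hd => ⟨fun _ => y, rfl, hzero y hy hd, by simp⟩
  | succ m ih =>
    intro y hy hd
    obtain ⟨z, hz, hdz, hyz⟩ := hstep y hy (by omega)
    obtain ⟨p, hp0, hpm, hpR⟩ := ih z hz (by omega)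
    refine ⟨fun | 0 => y | t + 1 => p t, rfl, hpm, ?_⟩
    rintro (_ | t) ht
    · simpa [hp0] using hyz
    · exact hpR t (by omega)

theorem hammingDist_update_add_one {ι : Type*} {β : ι → Type*} [Fintype ι] [DecidableEq ι]
    [∀ i, DecidableEq (β i)] {y a : ∀ i, β i} {k : ι} (hk : y k ≠ a k) :
    hammingDist (update y k (a k)) a + 1 = hammingDist y a := by
  have hsupp :
      ({i | update y k (a k) i ≠ a i} : Finset ι) = ({i | y i ≠ a i} : Finset ι).erase k := by
    ext i; by_cases h : i = k <;> simp [h, hk]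
  rw [hammingDist, hammingDist, hsupp, card_erase_add_one (by simpa using hk)]

section

variable {n : ℕ}

theorem fQ_update (Q : Fin n → Fin n → ℝ) (x : Fin n → ℝ) (k : Fin n) (v : ℝ) :
    fQ Q (update x k v) =
      fQ Q x + (v - x k) * ∑ j, (Q k j + Q j k) * x j + (v - x k) ^ 2 * Q k k := by
  have hupd : update x k v = fun j => x j + if j = k then v - x k else 0 := by
    ext j; by_cases h : j = k <;> simp [h]
  simp only [fQ, hupd, mul_add, add_mul, mul_ite, ite_mul, mul_zero, zero_mul, sum_add_distrib,
    sum_ite_irrel, sum_const_zero, sum_ite_eq', mem_univ, if_true, mul_sum]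
  have hrow : ∑ j, Q k j * (v - x k) * x j = ∑ j, (v - x k) * (Q k j * x j) :=
    sum_congr rfl fun _ _ => by ring
  have hcol : ∑ j, Q j k * x j * (v - x k) = ∑ j, (v - x k) * (Q j k * x j) :=
    sum_congr rfl fun _ _ => by ring
  rw [hrow, hcol]
  ring

theorem fQ_update_one_of_eq_zero (Q : Fin n → Fin n → ℝ) {x : Fin n → ℝ} {k : Fin n}
    (hk : x k = 0) :
    fQ Q (update x k 1) = fQ Q x + (Q k k + ∑ j, (Q k j + Q j k) * x j) := by
  rw [fQ_update, hk]
  ring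

theorem IsBinary.update {x : Fin n → ℝ} (hx : IsBinary x) (k : Fin n) {v : ℝ}
    (hv : v = 0 ∨ v = 1) : IsBinary (Function.update x k v) := by
  intro i
  by_cases h : i = k
  · subst h; simpa using hv
  · simpa [h] using hx i

theorem IsBinary.flipBit_eq_update {x y : Fin n → ℝ} (hx : IsBinary x) (hy : IsBinary y)
    {k : Fin n} (hk : x k ≠ y k) : flipBit x k = Function.update x k (y k) := by
  have hyk : y k = 1 - x k := by
    rcases hx k with h | h <;> rcases hy k with h' | h' <;> simp_all
  rw [flipBit, hyk]

variable {xs : Fin n → ℝ} {Q : Fin n → Fin n → ℝ}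

theorem SignPattern.add_neg_of_eq_zero (hQ : SignPattern xs Q) {k : Fin n} (hk : xs k = 0)
    (j : Fin n) : Q k j + Q j k < 0 := by
  have hkj := (hQ k j).2 (by simp [hk])
  have hjk := (hQ j k).2 (by simp [hk])
  linarith

theorem SignPattern.add_pos_of_eq_one (hQ : SignPattern xs Q) {k j : Fin n} (hk : xs k = 1)
    (hj : xs j = 1) : 0 < Q k j + Q j k := by
  have hkj := (hQ k j).1 (by simp [hk, hj])
  have hjk := (hQ j k).1 (by simp [hk, hj])
  linarith

theorem SignPattern.exists_update_lt (hQ : SignPattern xs Q) (hxs : IsBinary xs)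
    {y : Fin n → ℝ} (hy : IsBinary y) (hne : y ≠ xs) :
    ∃ k, y k ≠ xs k ∧ fQ Q y < fQ Q (update y k (xs k)) := by
  by_cases hoff : ∃ k, y k = 1 ∧ xs k = 0
  · obtain ⟨k, hyk, hxk⟩ := hoff
    refine ⟨k, by simp [hyk, hxk], ?_⟩
    set z := update y k 0
    have hz : IsBinary z := hy.update k (Or.inl rfl)
    have hyz : y = update z k 1 := by simp [z, ← hyk]
    have hsum : ∑ j, (Q k j + Q j k) * z j ≤ 0 := sum_nonpos fun j _ => by
      rcases hz j with h | h <;> simp [h, (hQ.add_neg_of_eq_zero hxk j).le]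
    have hgain := fQ_update_one_of_eq_zero Q (x := z) (k := k) (by simp [z])
    have hkk := hQ.add_neg_of_eq_zero hxk k
    rw [← hyz] at hgain
    rw [hxk]
    show fQ Q y < fQ Q z
    linarith
  · push Not at hoff
    have hsub : ∀ j, y j = 1 → xs j = 1 := fun j hj => (hxs j).resolve_left (hoff j hj)
    obtain ⟨k, hk⟩ := Function.ne_iff.mp hne
    have hyk : y k = 0 := (hy k).resolve_right fun h => hk (h.trans (hsub k h).symm)
    have hxk : xs k = 1 := (hxs k).resolve_left fun h => hk (hyk.trans h.symm)
    refine ⟨k, hk, ?_⟩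
    have hsum : 0 ≤ ∑ j, (Q k j + Q j k) * y j := sum_nonneg fun j _ => by
      rcases hy j with h | h
      · simp [h]
      · simpa [h] using (hQ.add_pos_of_eq_one hxk (hsub j h)).le
    have hkk := hQ.add_pos_of_eq_one hxk hxk
    rw [hxk, fQ_update_one_of_eq_zero Q hyk]
    linarith

end

open Classical in
theorem signPattern_improving_path_general {n : ℕ}
    (xs : Fin n → ℝ) (hxs : IsBinary xs)
    (Q : Fin n → Fin n → ℝ)
    (hQ : SignPattern xs Q)
    (x : Fin n → ℝ) (hx : IsBinary x) :
    ∃ p : ℕ → (Fin n → ℝ),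
      p 0 = x ∧
      p ((Finset.univ.filter fun i => x i ≠ xs i).card) = xs ∧
      ∀ t < (Finset.univ.filter fun i => x i ≠ xs i).card,
        ∃ k, p (t + 1) = flipBit (p t) k ∧ fQ Q (p t) < fQ Q (p (t + 1)) := by
  refine exists_chain_of_forall_exists_step IsBinary
    (fun y z => ∃ k, z = flipBit y k ∧ fQ Q y < fQ Q z) (hammingDist · xs) xs
    (fun y _ => hammingDist_eq_zero.mp) (fun y hy hd => ?_) x hx
  obtain ⟨k, hk, hlt⟩ := hQ.exists_update_lt hxs hy (hammingDist_ne_zero.mp hd)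
  exact ⟨update y k (xs k), hy.update k (hxs k), hammingDist_update_add_one hk,
    k, (hy.flipBit_eq_update hxs hk).symm, hlt⟩

open Classical in
/-- from any binary `x` there is a strictly improving 1-bit-flip path of length
exactly the Hamming distance from `x` to `x⋆`, ending at `x⋆`. -/
theorem signPattern_improving_path {n : ℕ} (hn : 0 < n)
    (xs : Fin n → ℝ) (hxs : IsBinary xs)
    (Q : Fin n → Fin n → ℝ) (hQsymm : ∀ i j, Q i j = Q j i)
    (hQ : SignPattern xs Q)
    (x : Fin n → ℝ) (hx : IsBinary x) :
    ∃ p : ℕ → (Fin n → ℝ),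
      p 0 = x ∧
      p ((Finset.univ.filter fun i => x i ≠ xs i).card) = xs ∧
      ∀ t < (Finset.univ.filter fun i => x i ≠ xs i).card,
        ∃ k, p (t + 1) = flipBit (p t) k ∧ fQ Q (p t) < fQ Q (p (t + 1)) :=
  signPattern_improving_path_general xs hxs Q hQ x hx
end

section
/- Let n be a positive integer and x⋆ ∈ {0,1}^n, and define the n×n matrix Q̂¹ by Q̂¹_{ij} = 1 if x⋆_i x⋆_j = 1 and Q̂¹_{ij} = −1 otherwise. Then Q̂¹ is symmetric, and x⋆ is both the unique 1-bit-flip local maximum and the unique global maximum over {0,1}^n of f̂¹(x) = xᵀQ̂¹x; moreover the maximum value equals (∑_{i=1}^n x⋆_i)². -/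
/-- The toy matrix `Q̂¹` ("construct by ±1"): entry `1` if `x⋆_i x⋆_j = 1`, else `-1`. -/
noncomputable def Qhat1 {n : ℕ} (xs : Fin n → ℝ) : Fin n → Fin n → ℝ :=
  fun i j => if xs i * xs j = 1 then 1 else -1


/-!
For binary `x⋆` the matrix is `Q̂¹_{ij} = 2 x⋆_i x⋆_j - 1`, so `f̂¹(x) = 2 a² - b²` with
`a = ⟨x, x⋆⟩` and `b = ∑ x_i`. On binary `x` we have `0 ≤ a ≤ b` and `a ≤ s := ∑ x⋆_i`, with
`a < b` or `a < s` unless `x = x⋆`; hence `f̂¹(x) < s² = f̂¹(x⋆)`. For a local maximum `x`,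
flipping a coordinate with `x_k = 1, x⋆_k = 0` would gain `2b - 1 > 0`, so `a = b`; then flipping
a coordinate with `x_k = 0, x⋆_k = 1` would gain `2a + 1 > 0`, so `x = x⋆`.
-/

open Finset

variable {n : ℕ}

namespace IsBinary

variable {x y : Fin n → ℝ}

lemma nonneg_s6 (hx : IsBinary x) (i : Fin n) : 0 ≤ x i := by
  rcases hx i with h | h <;> simp [h]

lemma mul_self (hx : IsBinary x) (i : Fin n) : x i * x i = x i := by
  rcases hx i with h | h <;> simp [h]

lemma mul_le_left (hx : IsBinary x) (hy : IsBinary y) (i : Fin n) : x i * y i ≤ x i := by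
  rcases hx i with h | h <;> rcases hy i with h' | h' <;> simp [h, h']

lemma flipBit (hx : IsBinary x) (k : Fin n) : IsBinary (flipBit x k) := by
  intro i
  rcases eq_or_ne i k with rfl | hik
  · rcases hx i with h | h <;> simp [_root_.flipBit, h]
  · simpa [_root_.flipBit, Function.update_of_ne hik] using hx i

lemma flipBit_ne (hx : IsBinary x) (k : Fin n) : _root_.flipBit x k ≠ x := by
  intro h
  have hk := congrFun h k
  rcases hx k with h' | h' <;> simp [_root_.flipBit, h'] at hk

lemma sum_mul_le_sum_left (hx : IsBinary x) (hy : IsBinary y) :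
    ∑ i, x i * y i ≤ ∑ i, x i :=
  sum_le_sum fun i _ => hx.mul_le_left hy i

lemma sum_mul_lt_sum_left (hx : IsBinary x) (hy : IsBinary y) {k : Fin n}
    (hxk : x k = 1) (hyk : y k = 0) : ∑ i, x i * y i < ∑ i, x i :=
  sum_lt_sum (fun i _ => hx.mul_le_left hy i) ⟨k, mem_univ k, by simp [hxk, hyk]⟩

end IsBinary

lemma sum_flipBit_mul (x y : Fin n → ℝ) (k : Fin n) :
    ∑ i, flipBit x k i * y i = ∑ i, x i * y i + (1 - 2 * x k) * y k := by
  have hrest : ∑ i ∈ {k}ᶜ, flipBit x k i * y i = ∑ i ∈ {k}ᶜ, x i * y i :=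
    sum_congr rfl fun i hi => by
      rw [flipBit, Function.update_of_ne (by simpa using hi)]
  rw [Fintype.sum_eq_add_sum_compl k, Fintype.sum_eq_add_sum_compl k (fun i => x i * y i), hrest]
  simp only [flipBit, Function.update_self]
  ring

lemma sum_flipBit (x : Fin n → ℝ) (k : Fin n) :
    ∑ i, flipBit x k i = ∑ i, x i + (1 - 2 * x k) := by
  simpa using sum_flipBit_mul x 1 k

variable {xs : Fin n → ℝ}

lemma Qhat1_symm (xs : Fin n → ℝ) (i j : Fin n) : Qhat1 xs i j = Qhat1 xs j i := by
  rw [Qhat1, Qhat1, mul_comm]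

lemma Qhat1_apply (hxs : IsBinary xs) (i j : Fin n) : Qhat1 xs i j = 2 * xs i * xs j - 1 := by
  rcases hxs i with hi | hi <;> rcases hxs j with hj | hj <;> norm_num [Qhat1, hi, hj]

lemma fQ_Qhat1 (hxs : IsBinary xs) (x : Fin n → ℝ) :
    fQ (Qhat1 xs) x = 2 * (∑ i, x i * xs i) ^ 2 - (∑ i, x i) ^ 2 := by
  have hterm : ∀ i j, Qhat1 xs i j * x i * x j = 2 * ((x i * xs i) * (x j * xs j)) - x i * x j :=
    fun i j => by rw [Qhat1_apply hxs]; ring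
  simp only [fQ, hterm, sum_sub_distrib, ← mul_sum, ← sum_mul]
  ring

lemma fQ_Qhat1_self (hxs : IsBinary xs) : fQ (Qhat1 xs) xs = (∑ i, xs i) ^ 2 := by
  rw [fQ_Qhat1 hxs]
  simp only [hxs.mul_self]
  ring

lemma fQ_Qhat1_lt_self (hxs : IsBinary xs) {x : Fin n → ℝ} (hx : IsBinary x) (hne : x ≠ xs) :
    fQ (Qhat1 xs) x < fQ (Qhat1 xs) xs := by
  rw [fQ_Qhat1_self hxs, fQ_Qhat1 hxs]
  have ha : 0 ≤ ∑ i, x i * xs i := sum_nonneg fun i _ => mul_nonneg (hx.nonneg_s6 i) (hxs.nonneg_s6 i)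
  have hab := hx.sum_mul_le_sum_left hxs
  have has : ∑ i, x i * xs i ≤ ∑ i, xs i := by
    simpa only [mul_comm] using hxs.sum_mul_le_sum_left hx
  obtain ⟨k, hk⟩ := Function.ne_iff.mp hne
  rcases hx k with h | h <;> rcases hxs k with h' | h'
  · exact absurd (h.trans h'.symm) hk
  · have : ∑ i, x i * xs i < ∑ i, xs i := by
      simpa only [mul_comm] using hxs.sum_mul_lt_sum_left hx h' h
    nlinarith
  · have := hx.sum_mul_lt_sum_left hxs h h'
    nlinarith
  · exact absurd (h.trans h'.symm) hk

lemma eq_of_forall_fQ_Qhat1_flipBit_le (hxs : IsBinary xs) {x : Fin n → ℝ} (hx : IsBinary x)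
    (hloc : ∀ k, fQ (Qhat1 xs) (flipBit x k) ≤ fQ (Qhat1 xs) x) : x = xs := by
  set a := ∑ i, x i * xs i
  set b := ∑ i, x i
  have hgain : ∀ k, 2 * (a + (1 - 2 * x k) * xs k) ^ 2 - (b + (1 - 2 * x k)) ^ 2 ≤
      2 * a ^ 2 - b ^ 2 := by
    intro k
    simpa only [fQ_Qhat1 hxs, sum_flipBit, sum_flipBit_mul] using hloc k
  have hsupp : ∀ k, x k = 1 → xs k = 1 := by
    intro k hk
    refine (hxs k).resolve_left fun hk' => ?_
    have hb : 1 ≤ b := hk ▸ single_le_sum (fun i _ => hx.nonneg_s6 i) (mem_univ k)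
    have := hgain k
    rw [hk, hk'] at this
    nlinarith
  have hab : a = b := sum_congr rfl fun i _ => by
    rcases hx i with h | h
    · simp [h]
    · simp [h, hsupp i h]
  funext k
  rcases hx k with h | h
  · refine h.trans ((hxs k).resolve_right fun hk' => ?_).symm
    have ha : 0 ≤ a := sum_nonneg fun i _ => mul_nonneg (hx.nonneg_s6 i) (hxs.nonneg_s6 i)
    have := hgain k
    rw [h, hk', ← hab] at this
    nlinarith
  · rw [h, hsupp k h]

theorem Qhat1_unimodal_general {n : ℕ}
    (xs : Fin n → ℝ) (hxs : IsBinary xs) :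
    (∀ i j, Qhat1 xs i j = Qhat1 xs j i) ∧
    (∀ k, fQ (Qhat1 xs) (flipBit xs k) ≤ fQ (Qhat1 xs) xs) ∧
    (∀ x : Fin n → ℝ, IsBinary x →
      (∀ k, fQ (Qhat1 xs) (flipBit x k) ≤ fQ (Qhat1 xs) x) → x = xs) ∧
    (∀ x : Fin n → ℝ, IsBinary x → x ≠ xs → fQ (Qhat1 xs) x < fQ (Qhat1 xs) xs) ∧
    fQ (Qhat1 xs) xs = (∑ i, xs i) ^ 2 :=
  ⟨Qhat1_symm xs,
    fun k => (fQ_Qhat1_lt_self hxs (hxs.flipBit k) (hxs.flipBit_ne k)).le,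
    fun _ hx hloc => eq_of_forall_fQ_Qhat1_flipBit_le hxs hx hloc,
    fun _ hx hne => fQ_Qhat1_lt_self hxs hx hne,
    fQ_Qhat1_self hxs⟩

/-- `Q̂¹` is symmetric, `x⋆` is its unique 1-bit-flip local maximum and its
unique global maximum over `{0,1}^n`, and the maximum value is `(∑ i, x⋆_i)²`. -/
theorem Qhat1_unimodal {n : ℕ} (hn : 0 < n)
    (xs : Fin n → ℝ) (hxs : IsBinary xs) :
    (∀ i j, Qhat1 xs i j = Qhat1 xs j i) ∧
    (∀ k, fQ (Qhat1 xs) (flipBit xs k) ≤ fQ (Qhat1 xs) xs) ∧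
    (∀ x : Fin n → ℝ, IsBinary x →
      (∀ k, fQ (Qhat1 xs) (flipBit x k) ≤ fQ (Qhat1 xs) x) → x = xs) ∧
    (∀ x : Fin n → ℝ, IsBinary x → x ≠ xs → fQ (Qhat1 xs) x < fQ (Qhat1 xs) xs) ∧
    fQ (Qhat1 xs) xs = (∑ i, xs i) ^ 2 :=
  Qhat1_unimodal_general xs hxs
end
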